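/- arXiv:2001.01998 — 5 statements merged into one kernel-verified Lean document; each statement's English description precedes it below -/
import Mathlib

section
/- The pair (π*, η*) with π* = −(f/γ)·a·Σ⁻¹ (the row vector a multiplied by the scalar −f/γ and then on the right by Σ⁻¹) and η* = −λ − (f/γ)·a is a saddle point of H on ℝⁿ × ℝⁿ: for all π, η ∈ ℝⁿ one has H(π, η*) ≤ H(π*, η*) ≤ H(π*, η). -/
open Matrix

/-- The pair `(π*, η*)` with `π* = −(f/γ)·a·Σ⁻¹` and
`η* = −λ − (f/γ)·a` is a saddle point of `H` on `ℝⁿ × ℝⁿ`. -/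
theorem saddle_point_of_H {n : ℕ} (hn : 1 ≤ n)
    (lam a : Fin n → ℝ) (S : Matrix (Fin n) (Fin n) ℝ) (hS : IsUnit S.det)
    (γ f F G b κ r : ℝ) (hγ0 : 0 < γ) (hγ1 : γ < 1)
    (H : (Fin n → ℝ) → (Fin n → ℝ) → ℝ)
    (hH : ∀ π η : Fin n → ℝ, H π η =
      F * r + G + (1 / 2) * (∑ i, a i * a i) * f ^ 2
        + (1 / 2) * γ * (γ - 1) * (∑ i, vecMul π S i * vecMul π S i)
        + γ * f * (∑ i, vecMul π S i * a i)
        + γ * (∑ i, vecMul π S i * (lam i + η i))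
        + f * (∑ i, η i * a i)
        + (b - κ * r) * f + γ * r)
    (πs ηs : Fin n → ℝ)
    (hπs : πs = (-(f / γ)) • vecMul a S⁻¹)
    (hηs : ηs = -lam - (f / γ) • a) :
    ∀ π η : Fin n → ℝ, H π ηs ≤ H πs ηs ∧ H πs ηs ≤ H πs η := by
  have hγ : γ ≠ 0 := ne_of_gt hγ0
  obtain ⟨c, hc⟩ : ∃ c : ℝ, f = γ * c := ⟨f / γ, by field_simp⟩
  subst hc
  have hcd : γ * c / γ = c := by field_simp
  rw [hcd] at hπs hηs
  have hY : ∀ i, vecMul πs S i = (-c) * a i := by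
    intro i
    rw [hπs, Matrix.smul_vecMul, Matrix.vecMul_vecMul, Matrix.nonsing_inv_mul S hS,
      Matrix.vecMul_one]
    simp
  have hηi : ∀ i, ηs i = -lam i - c * a i := by
    intro i; rw [hηs]; simp
  intro π η
  -- abbreviations
  set S1 := ∑ i, vecMul π S i * vecMul π S i with hS1
  set S2 := ∑ i, vecMul π S i * a i with hS2
  set S3 := ∑ i, a i * a i with hS3
  set L := ∑ i, lam i * a i with hL
  set E := ∑ i, η i * a i with hE
  have e1 : ∑ i, vecMul π S i * (lam i + ηs i) = (-c) * S2 := by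
    rw [hS2, Finset.mul_sum]
    refine Finset.sum_congr rfl fun i _ => ?_
    rw [hηi i]; ring
  have e2 : ∑ i, ηs i * a i = -L - c * S3 := by
    have h : ∑ i, ηs i * a i = ∑ i, (-(lam i * a i) + (-c) * (a i * a i)) :=
      Finset.sum_congr rfl fun i _ => by rw [hηi i]; ring
    rw [h, Finset.sum_add_distrib, Finset.sum_neg_distrib, ← Finset.mul_sum, hL, hS3]; ring
  have e3 : ∑ i, vecMul πs S i * vecMul πs S i = c ^ 2 * S3 := by
    rw [hS3, Finset.mul_sum]
    exact Finset.sum_congr rfl fun i _ => by rw [hY i]; ring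
  have e4 : ∑ i, vecMul πs S i * a i = -c * S3 := by
    rw [hS3, Finset.mul_sum]
    exact Finset.sum_congr rfl fun i _ => by rw [hY i]; ring
  have e5 : ∑ i, vecMul πs S i * (lam i + ηs i) = c ^ 2 * S3 := by
    rw [hS3, Finset.mul_sum]
    exact Finset.sum_congr rfl fun i _ => by rw [hY i, hηi i]; ring
  have e6 : ∑ i, vecMul πs S i * (lam i + η i) = (-c) * (L + E) := by
    rw [hL, hE, ← Finset.sum_add_distrib, Finset.mul_sum]
    exact Finset.sum_congr rfl fun i _ => by rw [hY i]; ring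
  have hQ : (0:ℝ) ≤ S1 + 2 * c * S2 + c ^ 2 * S3 := by
    have : ∑ i, (vecMul π S i + c * a i) ^ 2
        = S1 + 2 * c * S2 + c ^ 2 * S3 := by
      rw [hS1, hS2, hS3, Finset.mul_sum, Finset.mul_sum, ← Finset.sum_add_distrib,
        ← Finset.sum_add_distrib]
      exact Finset.sum_congr rfl fun i _ => by ring
    rw [← this]
    exact Finset.sum_nonneg fun i _ => sq_nonneg _
  constructor
  · rw [hH π ηs, hH πs ηs, e1, e2, e3, e4, e5]
    nlinarith [mul_nonneg (mul_nonneg hγ0.le (by linarith : (0:ℝ) ≤ 1 - γ)) hQ]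
  · rw [hH πs ηs, hH πs η, e2, e3, e4, e5, e6, ← hE]
    apply le_of_eq; ring
end

section
/- Suppose F = κ·f − γ and G = −( (1/2)‖a‖²f² + (1/2)‖a‖²f²·(γ−1)/γ − ‖a‖²f² − ⟨λ, a⟩·f + b·f ). Then, with π* = −(f/γ)·a·Σ⁻¹ and η* = −λ − (f/γ)·a, the Isaacs equation holds at the saddle point for every value of the state variable: for every r ∈ ℝ, the expression H(π*, η*) (built with that r) equals 0. -/
open Matrix

/-- With `F = κ·f − γ` and `G` chosen to cancel the remaining
constant terms, the Isaacs equation `H(π*, η*) = 0` holds for every value of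
the state variable `r`. -/
theorem isaacs_equation_at_saddle {n : ℕ} (hn : 1 ≤ n)
    (lam a : Fin n → ℝ) (S : Matrix (Fin n) (Fin n) ℝ) (hS : IsUnit S.det)
    (γ f F G b κ : ℝ) (hγ0 : 0 < γ) (hγ1 : γ < 1)
    (hF : F = κ * f - γ)
    (hG : G = -((1 / 2) * (∑ i, a i * a i) * f ^ 2
        + (1 / 2) * (∑ i, a i * a i) * f ^ 2 * ((γ - 1) / γ)
        - (∑ i, a i * a i) * f ^ 2
        - (∑ i, lam i * a i) * f
        + b * f))
    (H : ℝ → (Fin n → ℝ) → (Fin n → ℝ) → ℝ)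
    (hH : ∀ (r : ℝ) (π η : Fin n → ℝ), H r π η =
      F * r + G + (1 / 2) * (∑ i, a i * a i) * f ^ 2
        + (1 / 2) * γ * (γ - 1) * (∑ i, vecMul π S i * vecMul π S i)
        + γ * f * (∑ i, vecMul π S i * a i)
        + γ * (∑ i, vecMul π S i * (lam i + η i))
        + f * (∑ i, η i * a i)
        + (b - κ * r) * f + γ * r)
    (πs ηs : Fin n → ℝ)
    (hπs : πs = (-(f / γ)) • vecMul a S⁻¹)
    (hηs : ηs = -lam - (f / γ) • a) :
    ∀ r : ℝ, H r πs ηs = 0 := by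
  intro r
  have hγ : γ ≠ 0 := ne_of_gt hγ0
  have hv : vecMul πs S = (-(f / γ)) • a := by
    rw [hπs, smul_vecMul, vecMul_vecMul, Matrix.nonsing_inv_mul S hS, vecMul_one]
  rw [hH, hv, hηs, hF, hG]
  simp only [Pi.smul_apply, Pi.sub_apply, Pi.neg_apply, smul_eq_mul]
  have e1 : ∀ i : Fin n, -(f / γ) * a i * (-(f / γ) * a i)
      = (f / γ)^2 * (a i * a i) := by intro i; ring
  have e2 : ∀ i : Fin n, -(f / γ) * a i * a i = -(f / γ) * (a i * a i) := by
    intro i; ring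
  have e3 : ∀ i : Fin n, -(f / γ) * a i * (lam i + (-lam i - f / γ * a i))
      = (f / γ)^2 * (a i * a i) := by intro i; ring
  have e4 : ∀ i : Fin n, (-lam i - f / γ * a i) * a i
      = -(lam i * a i) - (f / γ) * (a i * a i) := by intro i; ring
  simp only [Finset.sum_congr rfl (fun i _ => e1 i),
    Finset.sum_congr rfl (fun i _ => e2 i),
    Finset.sum_congr rfl (fun i _ => e3 i),
    Finset.sum_congr rfl (fun i _ => e4 i),
    ← Finset.mul_sum, Finset.sum_sub_distrib, Finset.sum_neg_distrib]
  field_simp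
  ring
end

section
/- If (π₀, η₀) ∈ ℝⁿ × ℝⁿ is a saddle point of H, i.e. H(π, η₀) ≤ H(π₀, η₀) ≤ H(π₀, η) for all π, η ∈ ℝⁿ, then necessarily π₀ = −(f/γ)·a·Σ⁻¹ and η₀ = −λ − (f/γ)·a; in other words, the unrestricted saddle point of H is unique. -/
open Matrix

/-- The unrestricted saddle point of `H` is unique: any saddle
point `(π₀, η₀)` must equal `(−(f/γ)·a·Σ⁻¹, −λ − (f/γ)·a)`. -/
theorem saddle_point_unique {n : ℕ} (hn : 1 ≤ n)
    (lam a : Fin n → ℝ) (S : Matrix (Fin n) (Fin n) ℝ) (hS : IsUnit S.det)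
    (γ f F G b κ r : ℝ) (hγ0 : 0 < γ) (hγ1 : γ < 1)
    (H : (Fin n → ℝ) → (Fin n → ℝ) → ℝ)
    (hH : ∀ π η : Fin n → ℝ, H π η =
      F * r + G + (1 / 2) * (∑ i, a i * a i) * f ^ 2
        + (1 / 2) * γ * (γ - 1) * (∑ i, vecMul π S i * vecMul π S i)
        + γ * f * (∑ i, vecMul π S i * a i)
        + γ * (∑ i, vecMul π S i * (lam i + η i))
        + f * (∑ i, η i * a i)
        + (b - κ * r) * f + γ * r)
    (π₀ η₀ : Fin n → ℝ)
    (hsaddle : ∀ π η : Fin n → ℝ, H π η₀ ≤ H π₀ η₀ ∧ H π₀ η₀ ≤ H π₀ η) :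
    π₀ = (-(f / γ)) • vecMul a S⁻¹ ∧ η₀ = -lam - (f / γ) • a := by
  have hγ : γ ≠ 0 := ne_of_gt hγ0
  have hγ1' : γ - 1 ≠ 0 := by linarith
  set y : Fin n → ℝ := vecMul π₀ S with hy
  -- Step 1: linearity in η forces γ • (π₀ S) + f • a = 0
  have h1 : ∀ η : Fin n → ℝ,
      ∑ i, (γ * y i + f * a i) * η₀ i ≤ ∑ i, (γ * y i + f * a i) * η i := by
    intro η
    have h := (hsaddle π₀ η).2
    rw [hH, hH] at h
    have e : ∀ ξ : Fin n → ℝ,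
        γ * (∑ i, vecMul π₀ S i * (lam i + ξ i)) + f * (∑ i, ξ i * a i)
          = γ * (∑ i, y i * lam i) + ∑ i, (γ * y i + f * a i) * ξ i := by
      intro ξ
      simp only [Finset.mul_sum, ← Finset.sum_add_distrib]
      exact Finset.sum_congr rfl fun i _ => by rw [← hy]; ring
    have e1 := e η₀
    have e2 := e η
    linarith
  have hcz : ∀ i, γ * y i + f * a i = 0 := by
    have h2 := h1 (fun i => η₀ i - (γ * y i + f * a i))
    have hsplit : ∑ i, (γ * y i + f * a i) * (η₀ i - (γ * y i + f * a i))
        = ∑ i, (γ * y i + f * a i) * η₀ i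
          - ∑ i, (γ * y i + f * a i) * (γ * y i + f * a i) := by
      rw [← Finset.sum_sub_distrib]
      exact Finset.sum_congr rfl fun i _ => by ring
    have hsum : ∑ i, (γ * y i + f * a i) * (γ * y i + f * a i) ≤ 0 := by
      linarith [h2, hsplit]
    have hnn : ∀ i ∈ Finset.univ, 0 ≤ (γ * y i + f * a i) * (γ * y i + f * a i) :=
      fun i _ => mul_self_nonneg _
    have hz := (Finset.sum_eq_zero_iff_of_nonneg hnn).1
      (le_antisymm hsum (Finset.sum_nonneg hnn))
    intro i
    have := hz i (Finset.mem_univ i)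
    exact mul_self_eq_zero.mp this
  have hyv : ∀ i, y i = -(f / γ) * a i := by
    intro i
    have h := hcz i
    field_simp
    linear_combination h
  have hπ : π₀ = (-(f / γ)) • vecMul a S⁻¹ := by
    have hys : y = (-(f / γ)) • a := funext fun i => by
      rw [hyv i]; simp [smul_eq_mul]
    have hback : vecMul y S⁻¹ = π₀ := by
      rw [hy, vecMul_vecMul, Matrix.mul_nonsing_inv S hS, vecMul_one]
    rw [← hback, hys, smul_vecMul]
  -- Step 2: optimality in π forces y = m where m is the unconstrained maximizer
  set m : Fin n → ℝ := fun i => -(f * a i + lam i + η₀ i) / (γ - 1) with hm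
  have h2 : ∀ π : Fin n → ℝ,
      1 / 2 * γ * (γ - 1) * (∑ i, vecMul π S i * vecMul π S i)
        + γ * f * (∑ i, vecMul π S i * a i)
        + γ * (∑ i, vecMul π S i * (lam i + η₀ i))
      ≤ 1 / 2 * γ * (γ - 1) * (∑ i, y i * y i) + γ * f * (∑ i, y i * a i)
        + γ * (∑ i, y i * (lam i + η₀ i)) := by
    intro π
    have h := (hsaddle π η₀).1
    rw [hH, hH] at h
    rw [hy]
    linarith
  have hms : vecMul (vecMul m S⁻¹) S = m := by
    rw [vecMul_vecMul, Matrix.nonsing_inv_mul S hS, vecMul_one]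
  have h3 := h2 (vecMul m S⁻¹)
  rw [hms] at h3
  have sq : ∀ z : Fin n → ℝ,
      1 / 2 * γ * (γ - 1) * (∑ i, z i * z i) + γ * f * (∑ i, z i * a i)
        + γ * (∑ i, z i * (lam i + η₀ i))
      = ∑ i, (γ * (γ - 1) / 2 * (z i - m i) ^ 2 - γ * (γ - 1) / 2 * m i ^ 2) := by
    intro z
    simp only [Finset.mul_sum, ← Finset.sum_add_distrib]
    refine Finset.sum_congr rfl fun i _ => ?_
    simp only [hm]
    field_simp
    ring
  rw [sq m, sq y] at h3
  have e1 : ∑ i, (γ * (γ - 1) / 2 * (m i - m i) ^ 2 - γ * (γ - 1) / 2 * m i ^ 2)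
      = ∑ i, -(γ * (γ - 1) / 2 * m i ^ 2) := Finset.sum_congr rfl fun i _ => by ring
  have e2 : ∑ i, (γ * (γ - 1) / 2 * (y i - m i) ^ 2 - γ * (γ - 1) / 2 * m i ^ 2)
      = γ * (γ - 1) / 2 * (∑ i, (y i - m i) ^ 2)
        + ∑ i, -(γ * (γ - 1) / 2 * m i ^ 2) := by
    rw [Finset.mul_sum, ← Finset.sum_add_distrib]
    exact Finset.sum_congr rfl fun i _ => by ring
  rw [e1, e2] at h3
  have hK : 0 ≤ γ * (γ - 1) / 2 * (∑ i, (y i - m i) ^ 2) := by linarith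
  have hneg : γ * (γ - 1) / 2 < 0 := by nlinarith
  have hKle : (∑ i, (y i - m i) ^ 2) ≤ 0 := by
    by_contra hc
    push_neg at hc
    nlinarith
  have hnn2 : ∀ i ∈ Finset.univ, 0 ≤ (y i - m i) ^ 2 := fun i _ => sq_nonneg _
  have hz2 := (Finset.sum_eq_zero_iff_of_nonneg hnn2).1
    (le_antisymm hKle (Finset.sum_nonneg hnn2))
  refine ⟨hπ, funext fun i => ?_⟩
  have hym : y i = m i := by
    have := hz2 i (Finset.mem_univ i)
    have h := pow_eq_zero_iff (n := 2) (by norm_num) |>.mp this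
    linarith
  have hmi : y i * (γ - 1) = -(f * a i + lam i + η₀ i) := by
    rw [hym, hm]
    field_simp
  have hA := hcz i
  show η₀ i = (-lam - (f / γ) • a) i
  simp only [Pi.sub_apply, Pi.neg_apply, Pi.smul_apply, smul_eq_mul]
  field_simp
  linear_combination γ * hmi + (1 - γ) * hA
end

section
/- Suppose η* ∈ Γ minimizes over Γ the function η ↦ sup_{π ∈ ℝⁿ} H(π, η), and set π* = (1/(1−γ))·(λ + η* + f·a)·Σ⁻¹. Then (π*, η*) is a saddle point of H on ℝⁿ × Γ: H(π, η*) ≤ H(π*, η*) ≤ H(π*, η) for all π ∈ ℝⁿ and all η ∈ Γ. -/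
open Matrix

private lemma aux_limit_nonneg (L M : ℝ) (hM : 0 ≤ M)
    (h : ∀ t : ℝ, 0 < t → t ≤ 1 → 0 ≤ L + t * M) : 0 ≤ L := by
  by_contra hL
  push_neg at hL
  rcases eq_or_lt_of_le hM with hM0 | hM0
  · have := h 1 one_pos le_rfl; nlinarith
  · have ht1 : 0 < min 1 (-L / (2 * M)) := lt_min one_pos (div_pos (by linarith) (by linarith))
    have h2 := h _ ht1 (min_le_left _ _)
    have h3 : min 1 (-L / (2 * M)) * M ≤ (-L / (2 * M)) * M :=
      mul_le_mul_of_nonneg_right (min_le_right _ _) hM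
    have h4 : (-L / (2 * M)) * M = -L / 2 := by field_simp
    nlinarith

/-- If `η* ∈ Γ` minimizes `η ↦ sup_{π ∈ ℝⁿ} H(π, η)` over the
nonempty compact convex set `Γ`, and `π* = (1/(1−γ))·(λ + η* + f·a)·Σ⁻¹`, then
`(π*, η*)` is a saddle point of `H` on `ℝⁿ × Γ`. -/
theorem restricted_saddle_point {n : ℕ} (hn : 1 ≤ n)
    (lam a : Fin n → ℝ) (S : Matrix (Fin n) (Fin n) ℝ) (hS : IsUnit S.det)
    (γ f F G b κ r : ℝ) (hγ0 : 0 < γ) (hγ1 : γ < 1)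
    (H : (Fin n → ℝ) → (Fin n → ℝ) → ℝ)
    (hH : ∀ π η : Fin n → ℝ, H π η =
      F * r + G + (1 / 2) * (∑ i, a i * a i) * f ^ 2
        + (1 / 2) * γ * (γ - 1) * (∑ i, vecMul π S i * vecMul π S i)
        + γ * f * (∑ i, vecMul π S i * a i)
        + γ * (∑ i, vecMul π S i * (lam i + η i))
        + f * (∑ i, η i * a i)
        + (b - κ * r) * f + γ * r)
    (Γ : Set (Fin n → ℝ)) (hΓne : Γ.Nonempty) (hΓc : IsCompact Γ)
    (hΓconv : Convex ℝ Γ)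
    (ηs : Fin n → ℝ) (hηsΓ : ηs ∈ Γ)
    (hηsmin : ∀ η ∈ Γ, (⨆ π : Fin n → ℝ, H π ηs) ≤ ⨆ π : Fin n → ℝ, H π η)
    (πs : Fin n → ℝ)
    (hπs : πs = (1 / (1 - γ)) • vecMul (lam + ηs + f • a) S⁻¹) :
    ∀ π : Fin n → ℝ, ∀ η ∈ Γ, H π ηs ≤ H πs ηs ∧ H πs ηs ≤ H πs η := by
  have hγm : (0:ℝ) < 1 - γ := by linarith
  have hγne : (1:ℝ) - γ ≠ 0 := ne_of_gt hγm
  -- the maximizer map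
  set P : (Fin n → ℝ) → (Fin n → ℝ) :=
    fun η => (1 / (1 - γ)) • vecMul (lam + η + f • a) S⁻¹ with hP
  have hPS : ∀ η i, vecMul (P η) S i = (1 / (1 - γ)) * (lam i + η i + f * a i) := by
    intro η i
    have : vecMul (P η) S = (1 / (1 - γ)) • vecMul (vecMul (lam + η + f • a) S⁻¹) S := by
      rw [hP]; rw [smul_vecMul]
    rw [this, vecMul_vecMul, Matrix.nonsing_inv_mul S hS, vecMul_one]
    simp [Pi.smul_apply, Pi.add_apply]
  -- constant part
  set C0 : ℝ := F * r + G + (1 / 2) * (∑ i, a i * a i) * f ^ 2 + (b - κ * r) * f + γ * r with hC0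
  -- structured value of H
  have Hval : ∀ π η : Fin n → ℝ, H π η = C0 + f * (∑ i, η i * a i)
      + ∑ i, ((1/2) * γ * (γ-1) * (vecMul π S i)^2
            + γ * vecMul π S i * (lam i + η i + f * a i)) := by
    intro π η
    rw [hH]
    have h1 : (1/2) * γ * (γ-1) * (∑ i, vecMul π S i * vecMul π S i)
        + γ * f * (∑ i, vecMul π S i * a i)
        + γ * (∑ i, vecMul π S i * (lam i + η i))
        = ∑ i, ((1/2) * γ * (γ-1) * (vecMul π S i)^2
            + γ * vecMul π S i * (lam i + η i + f * a i)) := by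
      rw [Finset.mul_sum, Finset.mul_sum, Finset.mul_sum, ← Finset.sum_add_distrib,
        ← Finset.sum_add_distrib]
      exact Finset.sum_congr rfl fun i _ => by ring
    linarith
  -- maximality of P η
  have hmax : ∀ η π : Fin n → ℝ, H π η ≤ H (P η) η := by
    intro η π
    rw [Hval, Hval]
    have : ∀ i ∈ Finset.univ, ((1/2) * γ * (γ-1) * (vecMul π S i)^2
            + γ * vecMul π S i * (lam i + η i + f * a i))
        ≤ ((1/2) * γ * (γ-1) * (vecMul (P η) S i)^2
            + γ * vecMul (P η) S i * (lam i + η i + f * a i)) := by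
      intro i _
      rw [hPS]
      set u := lam i + η i + f * a i
      set x := vecMul π S i
      have hu : u = (1 - γ) * ((1 / (1-γ)) * u) := by field_simp
      set y := (1 / (1-γ)) * u with hy
      rw [hu]
      nlinarith [sq_nonneg (y - x), mul_pos hγ0 hγm, mul_nonneg (mul_nonneg hγ0.le hγm.le) (sq_nonneg (y - x))]
    have := Finset.sum_le_sum this
    linarith
  -- sup equals value at P η
  have hsup : ∀ η : Fin n → ℝ, (⨆ π : Fin n → ℝ, H π η) = H (P η) η := by
    intro η
    apply le_antisymm
    · exact ciSup_le fun π => hmax η π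
    · exact le_ciSup ⟨H (P η) η, by rintro _ ⟨π, rfl⟩; exact hmax η π⟩ (P η)
  have hπsP : πs = P ηs := hπs
  -- part 1
  intro π η hη
  constructor
  · rw [hπsP]; exact hmax ηs π
  -- part 2
  · -- explicit value of H (P η') η'
    have HPval : ∀ η' : Fin n → ℝ, H (P η') η' = C0 + f * (∑ i, η' i * a i)
        + ∑ i, (γ / (2 * (1 - γ))) * (lam i + η' i + f * a i)^2 := by
      intro η'
      rw [Hval]
      congr 1
      apply Finset.sum_congr rfl
      intro i _
      rw [hPS]
      field_simp
      ring
    set d : Fin n → ℝ := fun i => η i - ηs i with hd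
    set L : ℝ := f * (∑ i, d i * a i)
        + (γ / (1 - γ)) * (∑ i, (lam i + ηs i + f * a i) * d i) with hL
    set M : ℝ := (γ / (2 * (1 - γ))) * (∑ i, d i ^ 2) with hM
    have hM0 : 0 ≤ M := by
      apply mul_nonneg (by positivity)
      exact Finset.sum_nonneg fun i _ => sq_nonneg _
    have hkey : 0 ≤ L := by
      apply aux_limit_nonneg L M hM0
      intro t ht0 ht1
      have hηt : ηs + t • (η - ηs) ∈ Γ := by
        have h2 := hΓconv hηsΓ hη (by linarith : (0:ℝ) ≤ 1 - t) ht0.le (by ring)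
        have : (1 - t) • ηs + t • η = ηs + t • (η - ηs) := by
          funext i; simp [Pi.smul_apply]; ring
        rwa [this] at h2
      have hmin := hηsmin _ hηt
      rw [hsup, hsup, HPval, HPval] at hmin
      have e1 : (∑ i, (ηs + t • (η - ηs)) i * a i) = (∑ i, ηs i * a i) + t * ∑ i, d i * a i := by
        rw [Finset.mul_sum, ← Finset.sum_add_distrib]
        apply Finset.sum_congr rfl
        intro i _; simp [hd, Pi.smul_apply]; ring
      have e2 : (∑ i, (γ / (2 * (1 - γ))) * (lam i + (ηs + t • (η - ηs)) i + f * a i)^2)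
          = (∑ i, (γ / (2 * (1 - γ))) * (lam i + ηs i + f * a i)^2)
            + ((∑ i, (γ / (1 - γ)) * t * ((lam i + ηs i + f * a i) * d i))
              + ∑ i, t^2 * ((γ / (2 * (1 - γ))) * (d i ^ 2))) := by
        rw [← Finset.sum_add_distrib, ← Finset.sum_add_distrib]
        apply Finset.sum_congr rfl
        intro i _
        simp only [hd, Pi.smul_apply, Pi.add_apply, Pi.sub_apply, smul_eq_mul]
        field_simp
        ring
      have e3 : (∑ i, (γ / (1 - γ)) * t * ((lam i + ηs i + f * a i) * d i))
          = (γ / (1 - γ)) * t * ∑ i, (lam i + ηs i + f * a i) * d i := by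
        rw [Finset.mul_sum]
      have e4 : (∑ i, t^2 * ((γ / (2 * (1 - γ))) * (d i ^ 2)))
          = t^2 * ((γ / (2 * (1 - γ))) * ∑ i, d i ^ 2) := by
        rw [Finset.mul_sum, Finset.mul_sum]
      have expand : t * (L + t * M) = f * (t * ∑ i, d i * a i)
          + (((γ / (1 - γ)) * t * ∑ i, (lam i + ηs i + f * a i) * d i)
            + t^2 * ((γ / (2 * (1 - γ))) * ∑ i, d i ^ 2)) := by
        rw [hL, hM]; ring
      have h0 : 0 ≤ t * (L + t * M) := by
        rw [e1, e2, e3, e4] at hmin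
        rw [expand]
        linarith
      exact le_of_mul_le_mul_left (by simpa using h0) ht0
    -- conclude: H πs η - H πs ηs = L
    have hdiff : H πs η - H πs ηs = L := by
      rw [hπsP, Hval, Hval, hL]
      have e3 : (∑ i, ((1/2) * γ * (γ-1) * (vecMul (P ηs) S i)^2
            + γ * vecMul (P ηs) S i * (lam i + η i + f * a i)))
          - (∑ i, ((1/2) * γ * (γ-1) * (vecMul (P ηs) S i)^2
            + γ * vecMul (P ηs) S i * (lam i + ηs i + f * a i)))
          = (γ / (1 - γ)) * (∑ i, (lam i + ηs i + f * a i) * d i) := by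
        rw [← Finset.sum_sub_distrib, Finset.mul_sum]
        apply Finset.sum_congr rfl
        intro i _
        rw [hPS]
        simp only [hd]
        field_simp
        ring
      have e4 : f * (∑ i, η i * a i) - f * (∑ i, ηs i * a i) = f * (∑ i, d i * a i) := by
        rw [Finset.mul_sum, Finset.mul_sum, Finset.mul_sum, ← Finset.sum_sub_distrib]
        apply Finset.sum_congr rfl
        intro i _; simp only [hd]; ring
      linarith
    linarith
end

section
/- The minimax equality holds for H over ℝⁿ × Γ: inf_{η ∈ Γ} sup_{π ∈ ℝⁿ} H(π, η) = sup_{π ∈ ℝⁿ} inf_{η ∈ Γ} H(π, η), both sides being finite real numbers. -/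
open Matrix

set_option maxHeartbeats 1000000 in
/-- The minimax equality for `H` over `ℝⁿ × Γ`:
`inf_{η ∈ Γ} sup_{π ∈ ℝⁿ} H(π, η) = sup_{π ∈ ℝⁿ} inf_{η ∈ Γ} H(π, η)`. -/
theorem minimax_equality {n : ℕ} (hn : 1 ≤ n)
    (lam a : Fin n → ℝ) (S : Matrix (Fin n) (Fin n) ℝ) (hS : IsUnit S.det)
    (γ f F G b κ r : ℝ) (hγ0 : 0 < γ) (hγ1 : γ < 1)
    (H : (Fin n → ℝ) → (Fin n → ℝ) → ℝ)
    (hH : ∀ π η : Fin n → ℝ, H π η =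
      F * r + G + (1 / 2) * (∑ i, a i * a i) * f ^ 2
        + (1 / 2) * γ * (γ - 1) * (∑ i, vecMul π S i * vecMul π S i)
        + γ * f * (∑ i, vecMul π S i * a i)
        + γ * (∑ i, vecMul π S i * (lam i + η i))
        + f * (∑ i, η i * a i)
        + (b - κ * r) * f + γ * r)
    (Γ : Set (Fin n → ℝ)) (hΓne : Γ.Nonempty) (hΓc : IsCompact Γ)
    (hΓconv : Convex ℝ Γ) :
    (⨅ η : Γ, ⨆ π : Fin n → ℝ, H π η) =
      ⨆ π : Fin n → ℝ, ⨅ η : Γ, H π η := by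
  haveI : Nonempty Γ := hΓne.to_subtype
  have h1γ : (0:ℝ) < 1 - γ := by linarith
  have h1γ' : (1:ℝ) - γ ≠ 0 := ne_of_gt h1γ
  set c : ℝ := γ * (1 - γ) / 2 with hc
  set k : ℝ := γ / (2 * (1 - γ)) with hk
  have hcpos : 0 < c := by rw [hc]; positivity
  have hkpos : 0 < k := by rw [hk]; positivity
  set A : ℝ := F * r + G + (1 / 2) * (∑ i, a i * a i) * f ^ 2 + (b - κ * r) * f + γ * r with hA
  set w0 : Fin n → ℝ := fun i => lam i + f * a i with hw0
  set Φ : (Fin n → ℝ) → (Fin n → ℝ) → ℝ := fun x η =>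
    A + γ * (∑ i, x i * (w0 i + η i)) + f * (∑ i, η i * a i) - c * (∑ i, x i * x i) with hΦ
  set g : (Fin n → ℝ) → ℝ := fun η =>
    A + f * (∑ i, η i * a i) + k * (∑ i, (w0 i + η i) * (w0 i + η i)) with hg
  -- H in terms of Φ
  have hHΦ : ∀ π η, H π η = Φ (vecMul π S) η := by
    intro π η
    rw [hH]
    simp only [hΦ, hw0, hc, hA]
    rw [show (∑ i, vecMul π S i * (lam i + f * a i + η i))
        = (∑ i, vecMul π S i * (lam i + η i)) + f * (∑ i, vecMul π S i * a i) by
      rw [Finset.mul_sum, ← Finset.sum_add_distrib]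
      exact Finset.sum_congr rfl fun i _ => by ring]
    ring
  -- completing the square
  have hsq : ∀ x η : Fin n → ℝ, Φ x η = g η
      - c * ∑ i, (x i - (w0 i + η i) / (1 - γ)) * (x i - (w0 i + η i) / (1 - γ)) := by
    intro x η
    have point : ∀ i : Fin n, γ * (x i * (w0 i + η i)) - c * (x i * x i)
        = k * ((w0 i + η i) * (w0 i + η i))
          - c * ((x i - (w0 i + η i) / (1 - γ)) * (x i - (w0 i + η i) / (1 - γ))) := by
      intro i; rw [hc, hk]; field_simp; ring
    have hsum : (∑ i, (γ * (x i * (w0 i + η i)) - c * (x i * x i)))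
        = ∑ i, (k * ((w0 i + η i) * (w0 i + η i))
          - c * ((x i - (w0 i + η i) / (1 - γ)) * (x i - (w0 i + η i) / (1 - γ)))) :=
      Finset.sum_congr rfl fun i _ => point i
    rw [Finset.sum_sub_distrib, Finset.sum_sub_distrib, ← Finset.mul_sum, ← Finset.mul_sum,
      ← Finset.mul_sum, ← Finset.mul_sum] at hsum
    simp only [hΦ, hg]
    linarith
  have hbound : ∀ x η : Fin n → ℝ, Φ x η ≤ g η := by
    intro x η
    rw [hsq x η]
    have h0 : 0 ≤ ∑ i, (x i - (w0 i + η i) / (1 - γ)) * (x i - (w0 i + η i) / (1 - γ)) :=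
      Finset.sum_nonneg fun i _ => mul_self_nonneg _
    nlinarith [mul_nonneg hcpos.le h0]
  have hΦmax : ∀ η : Fin n → ℝ, Φ (fun i => (w0 i + η i) / (1 - γ)) η = g η := by
    intro η
    rw [hsq]
    simp
  have hsup : ∀ η : Fin n → ℝ, (⨆ x : Fin n → ℝ, Φ x η) = g η := by
    intro η
    apply le_antisymm
    · exact ciSup_le fun x => hbound x η
    · calc g η = Φ (fun i => (w0 i + η i) / (1 - γ)) η := (hΦmax η).symm
        _ ≤ ⨆ x, Φ x η :=
          le_ciSup (f := fun x => Φ x η) ⟨g η, by rintro _ ⟨x, rfl⟩; exact hbound x η⟩ _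
  have hsurj : Function.Surjective (fun π : Fin n → ℝ => vecMul π S) := by
    intro x
    refine ⟨vecMul x S⁻¹, ?_⟩
    show vecMul (vecMul x S⁻¹) S = x
    rw [vecMul_vecMul, Matrix.nonsing_inv_mul S hS, vecMul_one]
  have hsupH : ∀ η : Fin n → ℝ, (⨆ π : Fin n → ℝ, H π η) = g η := by
    intro η
    have h1 : (⨆ π : Fin n → ℝ, H π η) = ⨆ π : Fin n → ℝ, Φ (vecMul π S) η := by
      congr 1; funext π; exact hHΦ π η
    rw [h1, hsurj.iSup_comp (fun x => Φ x η), hsup η]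
  -- continuity and minimizer
  have hcontΦ : ∀ x : Fin n → ℝ, Continuous fun η : Fin n → ℝ => Φ x η := by
    intro x
    simp only [hΦ]
    refine ((continuous_const.add (continuous_const.mul ?_)).add
        (continuous_const.mul ?_)).sub continuous_const
    · exact continuous_finset_sum _ fun i _ =>
        continuous_const.mul (continuous_const.add (continuous_apply i))
    · exact continuous_finset_sum _ fun i _ => (continuous_apply i).mul continuous_const
  have hcontg : Continuous g := by
    simp only [hg]
    refine (continuous_const.add (continuous_const.mul ?_)).add (continuous_const.mul ?_)
    · exact continuous_finset_sum _ fun i _ => (continuous_apply i).mul continuous_const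
    · exact continuous_finset_sum _ fun i _ =>
        (continuous_const.add (continuous_apply i)).mul (continuous_const.add (continuous_apply i))
  obtain ⟨ηs, hηsΓ, hmin⟩ := hΓc.exists_isMinOn hΓne hcontg.continuousOn
  have hmin' : ∀ x ∈ Γ, g ηs ≤ g x := isMinOn_iff.mp hmin
  -- gradient at the minimizer
  set v : Fin n → ℝ := fun i => f * a i + 2 * k * (w0 i + ηs i) with hv
  have hline : ∀ (η' : Fin n → ℝ) (t : ℝ),
      g (fun i => ηs i + t * (η' i - ηs i))
        = g ηs + t * (∑ i, (η' i - ηs i) * v i)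
          + t ^ 2 * (k * ∑ i, (η' i - ηs i) * (η' i - ηs i)) := by
    intro η' t
    have point : ∀ i : Fin n,
        f * ((ηs i + t * (η' i - ηs i)) * a i)
          + k * ((w0 i + (ηs i + t * (η' i - ηs i))) * (w0 i + (ηs i + t * (η' i - ηs i))))
        = (f * (ηs i * a i) + k * ((w0 i + ηs i) * (w0 i + ηs i)))
          + (t * ((η' i - ηs i) * v i) + t ^ 2 * (k * ((η' i - ηs i) * (η' i - ηs i)))) := by
      intro i; simp only [hv]; ring
    have hsum : (∑ i, (f * ((ηs i + t * (η' i - ηs i)) * a i)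
          + k * ((w0 i + (ηs i + t * (η' i - ηs i))) * (w0 i + (ηs i + t * (η' i - ηs i))))))
        = ∑ i, ((f * (ηs i * a i) + k * ((w0 i + ηs i) * (w0 i + ηs i)))
          + (t * ((η' i - ηs i) * v i) + t ^ 2 * (k * ((η' i - ηs i) * (η' i - ηs i))))) :=
      Finset.sum_congr rfl fun i _ => point i
    simp only [Finset.sum_add_distrib, ← Finset.mul_sum] at hsum
    simp only [hg]
    linarith
  have hopt : ∀ η' ∈ Γ, 0 ≤ ∑ i, (η' i - ηs i) * v i := by
    intro η' hη'
    set s := ∑ i, (η' i - ηs i) * v i with hs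
    set q := k * ∑ i, (η' i - ηs i) * (η' i - ηs i) with hq
    by_contra hneg
    push_neg at hneg
    have hdd : 0 ≤ ∑ i, (η' i - ηs i) * (η' i - ηs i) :=
      Finset.sum_nonneg fun i _ => mul_self_nonneg _
    have hddpos : 0 < ∑ i, (η' i - ηs i) * (η' i - ηs i) := by
      rcases hdd.lt_or_eq with h | h
      · exact h
      · exfalso
        have hz : ∀ i ∈ Finset.univ, (η' i - ηs i) * (η' i - ηs i) = 0 :=
          (Finset.sum_eq_zero_iff_of_nonneg (fun i _ => mul_self_nonneg _)).mp h.symm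
        have hs0 : s = 0 := hs.trans (Finset.sum_eq_zero fun i hi => by
          rw [mul_self_eq_zero.mp (hz i hi), zero_mul])
        linarith
    have hqpos : 0 < q := by rw [hq]; exact mul_pos hkpos hddpos
    set t := min 1 (-s / (2 * q)) with ht
    have ht0 : 0 < t := lt_min one_pos (div_pos (by linarith) (by linarith))
    have ht1 : t ≤ 1 := min_le_left _ _
    have hmem : (fun i => ηs i + t * (η' i - ηs i)) ∈ Γ := by
      have hmem' := hΓconv hηsΓ hη' (by linarith : (0:ℝ) ≤ 1 - t) ht0.le (by ring)
      have heq : (fun i => ηs i + t * (η' i - ηs i)) = (1 - t) • ηs + t • η' := by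
        funext i
        simp only [Pi.add_apply, Pi.smul_apply, smul_eq_mul]
        ring
      rw [heq]; exact hmem'
    have hge := hmin' _ hmem
    rw [hline η' t] at hge
    rw [← hs, ← hq] at hge
    have h2 : 0 ≤ s + t * q := by
      have h1' : t * 0 ≤ t * (s + t * q) := by nlinarith
      exact le_of_mul_le_mul_left h1' ht0
    have htle : t ≤ -s / (2 * q) := min_le_right _ _
    have h3 : t * (2 * q) ≤ -s := (le_div_iff₀ (by linarith)).mp htle
    nlinarith [mul_pos ht0 hqpos]
  -- saddle point value identity
  set m : Fin n → ℝ := fun i => (w0 i + ηs i) / (1 - γ) with hm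
  have hΦm : ∀ η' : Fin n → ℝ, Φ m η' = g ηs + ∑ i, (η' i - ηs i) * v i := by
    intro η'
    have point : ∀ i : Fin n,
        γ * (m i * (w0 i + η' i)) + f * (η' i * a i) - c * (m i * m i)
        = (f * (ηs i * a i) + k * ((w0 i + ηs i) * (w0 i + ηs i))) + (η' i - ηs i) * v i := by
      intro i; simp only [hm, hv, hc, hk]; field_simp; ring
    have hsum : (∑ i, (γ * (m i * (w0 i + η' i)) + f * (η' i * a i) - c * (m i * m i)))
        = ∑ i, ((f * (ηs i * a i) + k * ((w0 i + ηs i) * (w0 i + ηs i))) + (η' i - ηs i) * v i) :=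
      Finset.sum_congr rfl fun i _ => point i
    simp only [Finset.sum_add_distrib, Finset.sum_sub_distrib, ← Finset.mul_sum] at hsum
    simp only [hΦ, hg]
    linarith
  have hΦmηs : Φ m ηs = g ηs := by
    rw [hΦm]
    simp
  -- boundedness of the inner infimum families
  have hcontH : ∀ π : Fin n → ℝ, Continuous fun η => H π η := by
    intro π
    have heq : (fun η => H π η) = fun η => Φ (vecMul π S) η := funext fun η => hHΦ π η
    rw [heq]; exact hcontΦ _
  have hbb : ∀ π : Fin n → ℝ, BddBelow (Set.range fun η : Γ => H π (η : Fin n → ℝ)) := by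
    intro π
    rw [← Set.image_eq_range]
    exact (hΓc.image (hcontH π)).bddBelow
  have hub : ∀ π : Fin n → ℝ, (⨅ η : Γ, H π η) ≤ g ηs := by
    intro π
    refine le_trans (ciInf_le (hbb π) ⟨ηs, hηsΓ⟩) ?_
    rw [hHΦ]
    exact hbound _ ηs
  -- compute both sides
  have hL : (⨅ η : Γ, ⨆ π : Fin n → ℝ, H π η) = g ηs := by
    simp only [hsupH]
    apply le_antisymm
    · exact ciInf_le_of_le ⟨g ηs, by rintro _ ⟨η, rfl⟩; exact hmin' _ η.2⟩ ⟨ηs, hηsΓ⟩ le_rfl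
    · exact le_ciInf fun η => hmin' _ η.2
  have hR : (⨆ π : Fin n → ℝ, ⨅ η : Γ, H π η) = g ηs := by
    apply le_antisymm
    · exact ciSup_le fun π => hub π
    · obtain ⟨π₀, hπ₀⟩ := hsurj m
      have hπ₀' : vecMul π₀ S = m := hπ₀
      have hinf : (⨅ η : Γ, H π₀ η) = g ηs := by
        apply le_antisymm
        · calc (⨅ η : Γ, H π₀ η) ≤ H π₀ ηs := ciInf_le (hbb π₀) ⟨ηs, hηsΓ⟩
            _ = Φ m ηs := by rw [hHΦ, hπ₀']
            _ = g ηs := hΦmηs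
        · refine le_ciInf fun η => ?_
          rw [hHΦ, hπ₀', hΦm]
          have := hopt η η.2
          linarith
      rw [← hinf]
      exact le_ciSup ⟨g ηs, by rintro _ ⟨π, rfl⟩; exact hub π⟩ π₀
  rw [hL, hR]
end
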